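/- Soundness and completeness of S4.2 (main theorem): with countable sets of propositional symbols and agent labels, a formula φ is valid in all Kripke models based on weakly directed preorders (reflexive, transitive, weakly directed accessibility relations) if and only if φ is a theorem of S4.2. -/

import Mathlib

/-- Formulas of multi-agent modal logic: ⊥, variables, ∨, ∧, →, K_i. -/
inductive Form (α P : Type) : Type
  | fls : Form α P
  | var : P → Form α P
  | dis : Form α P → Form α P → Form α P
  | con : Form α P → Form α P → Form α P
  | imp : Form α P → Form α P → Form α P
  | box : α → Form α P → Form α P

namespace Form

/-- Negation ¬φ := φ → ⊥. -/
def neg {α P : Type} (p : Form α P) : Form α P := p.imp .fls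

/-- Verum ⊤ := ¬⊥. -/
def top {α P : Type} : Form α P := neg .fls

/-- Biconditional φ ↔ ψ := (φ → ψ) ∧ (ψ → φ). -/
def iff' {α P : Type} (p q : Form α P) : Form α P := (p.imp q).con (q.imp p)

/-- Dual operator L_i φ := ¬ K_i ¬ φ. -/
def dia {α P : Type} (i : α) (p : Form α P) : Form α P := (Form.box i p.neg).neg

end Form

/-- Boolean evaluation of a formula, treating modal subformulas as atoms
(interpreted by `h`). -/
def beval {α P : Type} (g : P → Bool) (h : Form α P → Bool) : Form α P → Bool
  | .fls => false
  | .var x => g x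
  | .dis p q => beval g h p || beval g h q
  | .con p q => beval g h p && beval g h q
  | .imp p q => !(beval g h p) || beval g h q
  | .box i p => h (.box i p)

/-- A propositional tautology: true under every valuation of the variables and
of the modal subformulas. -/
def Tautology {α P : Type} (p : Form α P) : Prop := ∀ g h, beval g h p = true

/-- Hilbert system K + the axiom set `Ax`: all propositional tautologies,
axiom K, the extra axioms, closed under Modus Ponens and Necessitation. -/
inductive Prf {α P : Type} (Ax : Form α P → Prop) : Form α P → Prop
  | taut {p} : Tautology p → Prf Ax p
  | axK {i p q} : Prf Ax (((Form.box i (p.imp q)).con (Form.box i p)).imp (Form.box i q))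
  | ax {p} : Ax p → Prf Ax p
  | mp {p q} : Prf Ax (p.imp q) → Prf Ax p → Prf Ax q
  | nec {i p} : Prf Ax p → Prf Ax (Form.box i p)

/-- The empty axiom set: `Prf KAx` is the pure system K. -/
def KAx {α P : Type} : Form α P → Prop := fun _ => False

/-- Axiom T: K_i φ → φ. -/
def AxT {α P : Type} (φ : Form α P) : Prop := ∃ i p, φ = (Form.box i p).imp p

/-- Axiom 4: K_i φ → K_i K_i φ. -/
def Ax4 {α P : Type} (φ : Form α P) : Prop :=
  ∃ i p, φ = (Form.box i p).imp (Form.box i (Form.box i p))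

/-- Axiom .2: ¬K_i ¬K_i φ → K_i ¬K_i ¬φ. -/
def Ax2 {α P : Type} (φ : Form α P) : Prop :=
  ∃ i p, φ = ((Form.box i (Form.box i p).neg).neg).imp (Form.box i (Form.box i p.neg).neg)

/-- Axioms of S4: T and 4. -/
def AxS4 {α P : Type} (φ : Form α P) : Prop := AxT φ ∨ Ax4 φ

/-- Axioms of S4.2: T, 4 and .2. -/
def AxS42 {α P : Type} (φ : Form α P) : Prop := AxT φ ∨ Ax4 φ ∨ Ax2 φ

/-- Iterated implication ψ₁ → (ψ₂ → … (ψ_k → φ)…); for the empty list it is φ. -/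
def imply {α P : Type} : List (Form α P) → Form α P → Form α P
  | [], q => q
  | p :: l, q => p.imp (imply l q)

/-- Conjunction ψ₁ ∧ … ∧ ψ_k (∧ ⊤); for the empty list it is ⊤. -/
def conj {α P : Type} : List (Form α P) → Form α P
  | [] => Form.top
  | p :: l => p.con (conj l)

/-- A set Γ is consistent w.r.t. K+Ax if no finite list of its elements derives ⊥. -/
def Consistent {α P : Type} (Ax : Form α P → Prop) (Γ : Set (Form α P)) : Prop :=
  ¬ ∃ l : List (Form α P), (∀ ψ ∈ l, ψ ∈ Γ) ∧ Prf Ax (imply l Form.fls)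

/-- Γ is maximal consistent if it is consistent and contains φ or ¬φ for every φ. -/
def MaximalConsistent {α P : Type} (Ax : Form α P → Prop) (Γ : Set (Form α P)) : Prop :=
  Consistent Ax Γ ∧ ∀ φ : Form α P, φ ∈ Γ ∨ Form.neg φ ∈ Γ

/-- A Kripke model: a valuation and one accessibility relation per agent. -/
structure Kripke (α P W : Type) where
  val : W → P → Prop
  rel : α → W → W → Prop

/-- Satisfaction of a formula at a world of a Kripke model. -/
def sat {α P W : Type} (M : Kripke α P W) : W → Form α P → Prop
  | _, .fls => False
  | w, .var x => M.val w x
  | w, .dis p q => sat M w p ∨ sat M w q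
  | w, .con p q => sat M w p ∧ sat M w q
  | w, .imp p q => sat M w p → sat M w q
  | w, .box i p => ∀ v, M.rel i w v → sat M v p

/-- A family of relations is weakly directed (confluent). -/
def WeaklyDirected {α W : Type} (R : α → W → W → Prop) : Prop :=
  ∀ i v w u, R i v w → R i v u → ∃ x, R i w x ∧ R i u x

/-- Each relation is reflexive. -/
def ReflexiveRel {α W : Type} (R : α → W → W → Prop) : Prop :=
  ∀ i w, R i w w

/-- Each relation is transitive. -/
def TransitiveRel {α W : Type} (R : α → W → W → Prop) : Prop :=
  ∀ i u v w, R i u v → R i v w → R i u w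

section S42Machinery

open Form

variable {α P : Type} {Ax : Form α P → Prop}

namespace Prf

variable {p q r c : Form α P} {i : α}

lemma id1 : Prf Ax (p.imp p) :=
  .taut (by intro v f; simp only [beval]; cases beval v f p <;> rfl)

lemma weak : Prf Ax (q.imp (p.imp q)) :=
  .taut (by intro v f; simp only [beval]
            cases beval v f p <;> cases beval v f q <;> rfl)

lemma frege4 :
    Prf Ax ((p.imp (q.imp r)).imp ((c.imp p).imp ((c.imp q).imp (c.imp r)))) :=
  .taut (by intro v f; simp only [beval]
            cases beval v f p <;> cases beval v f q <;> cases beval v f r <;>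
              cases beval v f c <;> rfl)

lemma curry : Prf Ax (((p.con q).imp r).imp (p.imp (q.imp r))) :=
  .taut (by intro v f; simp only [beval]
            cases beval v f p <;> cases beval v f q <;> cases beval v f r <;> rfl)

lemma uncurry : Prf Ax ((p.imp (q.imp r)).imp ((p.con q).imp r)) :=
  .taut (by intro v f; simp only [beval]
            cases beval v f p <;> cases beval v f q <;> cases beval v f r <;> rfl)

lemma imp_top : Prf Ax (p.imp Form.top) :=
  .taut (by intro v f; simp only [beval, Form.top, Form.neg]
            cases beval v f p <;> rfl)

lemma and_left : Prf Ax ((p.con q).imp p) :=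
  .taut (by intro v f; simp only [beval]
            cases beval v f p <;> cases beval v f q <;> rfl)

lemma and_right : Prf Ax ((p.con q).imp q) :=
  .taut (by intro v f; simp only [beval]
            cases beval v f p <;> cases beval v f q <;> rfl)

lemma and_pair : Prf Ax (p.imp (q.imp (p.con q))) :=
  .taut (by intro v f; simp only [beval]
            cases beval v f p <;> cases beval v f q <;> rfl)

lemma and_intro3 : Prf Ax ((c.imp p).imp ((c.imp q).imp (c.imp (p.con q)))) :=
  .taut (by intro v f; simp only [beval]
            cases beval v f p <;> cases beval v f q <;> cases beval v f c <;> rfl)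

lemma comp : Prf Ax ((p.imp q).imp ((q.imp r).imp (p.imp r))) :=
  .taut (by intro v f; simp only [beval]
            cases beval v f p <;> cases beval v f q <;> cases beval v f r <;> rfl)

lemma comp2 : Prf Ax ((q.imp r).imp ((p.imp q).imp (p.imp r))) :=
  .taut (by intro v f; simp only [beval]
            cases beval v f p <;> cases beval v f q <;> cases beval v f r <;> rfl)

lemma swap : Prf Ax ((p.imp (q.imp r)).imp (q.imp (p.imp r))) :=
  .taut (by intro v f; simp only [beval]
            cases beval v f p <;> cases beval v f q <;> cases beval v f r <;> rfl)

lemma dne : Prf Ax ((p.neg.neg).imp p) :=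
  .taut (by intro v f; simp only [beval, Form.neg]
            cases beval v f p <;> rfl)

lemma neg_imp : Prf Ax (p.neg.imp (p.imp q)) :=
  .taut (by intro v f; simp only [beval, Form.neg]
            cases beval v f p <;> cases beval v f q <;> rfl)

lemma absurd_t : Prf Ax (p.imp (p.neg.imp q)) :=
  .taut (by intro v f; simp only [beval, Form.neg]
            cases beval v f p <;> cases beval v f q <;> rfl)

lemma or_inl : Prf Ax (p.imp (p.dis q)) :=
  .taut (by intro v f; simp only [beval]
            cases beval v f p <;> cases beval v f q <;> rfl)

lemma or_inr : Prf Ax (q.imp (p.dis q)) :=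
  .taut (by intro v f; simp only [beval]
            cases beval v f p <;> cases beval v f q <;> rfl)

lemma neg_or : Prf Ax (p.neg.imp (q.neg.imp ((p.dis q).imp Form.fls))) :=
  .taut (by intro v f; simp only [beval, Form.neg]
            cases beval v f p <;> cases beval v f q <;> rfl)

lemma taut_top : Prf Ax (Form.top : Form α P) :=
  .taut (by intro v f; rfl)

lemma imp_trans (h1 : Prf Ax (p.imp q)) (h2 : Prf Ax (q.imp r)) : Prf Ax (p.imp r) :=
  (comp.mp h1).mp h2

lemma imp_mono_right (h : Prf Ax (q.imp r)) : Prf Ax ((p.imp q).imp (p.imp r)) :=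
  comp2.mp h

lemma and_intro_imp (h1 : Prf Ax (c.imp p)) (h2 : Prf Ax (c.imp q)) :
    Prf Ax (c.imp (p.con q)) :=
  (and_intro3.mp h1).mp h2

lemma axK' : Prf Ax ((Form.box i (p.imp q)).imp ((Form.box i p).imp (Form.box i q))) :=
  curry.mp Prf.axK

lemma box_mp (h : Prf Ax (Form.box i (p.imp q))) :
    Prf Ax ((Form.box i p).imp (Form.box i q)) :=
  axK'.mp h

end Prf

lemma imply_append (l1 l2 : List (Form α P)) (q : Form α P) :
    imply (l1 ++ l2) q = imply l1 (imply l2 q) := by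
  induction l1 with
  | nil => rfl
  | cons a t ih => simp [imply, ih]

lemma prf_conj_to_imply (l : List (Form α P)) (q : Form α P) :
    Prf Ax (((conj l).imp q).imp (imply l q)) := by
  induction l generalizing q with
  | nil =>
    simp only [conj, imply]
    exact Prf.taut (by
      intro v f; simp only [beval, Form.top, Form.neg]
      cases beval v f q <;> rfl)
  | cons a t ih =>
    simp only [conj, imply]
    exact Prf.imp_trans Prf.curry (Prf.imp_mono_right (ih q))

lemma prf_imply_to_conj (l : List (Form α P)) (q : Form α P) :
    Prf Ax ((imply l q).imp ((conj l).imp q)) := by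
  induction l generalizing q with
  | nil => simp only [conj, imply]; exact Prf.weak
  | cons a t ih =>
    simp only [conj, imply]
    exact Prf.imp_trans (Prf.imp_mono_right (ih q)) Prf.uncurry

lemma prf_imply_of_conj {l : List (Form α P)} {q : Form α P}
    (h : Prf Ax ((conj l).imp q)) : Prf Ax (imply l q) :=
  (prf_conj_to_imply l q).mp h

lemma prf_conj_of_imply {l : List (Form α P)} {q : Form α P}
    (h : Prf Ax (imply l q)) : Prf Ax ((conj l).imp q) :=
  (prf_imply_to_conj l q).mp h

lemma prf_conj_mem {l : List (Form α P)} {q : Form α P} (hm : q ∈ l) :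
    Prf Ax ((conj l).imp q) := by
  induction l with
  | nil => simp at hm
  | cons a t ih =>
    simp only [conj]
    rcases List.mem_cons.mp hm with h | h
    · subst h; exact Prf.and_left
    · exact Prf.imp_trans Prf.and_right (ih h)

lemma prf_conj_mono {l l' : List (Form α P)} (hsub : ∀ ψ ∈ l, ψ ∈ l') :
    Prf Ax ((conj l').imp (conj l)) := by
  induction l with
  | nil => simp only [conj]; exact Prf.imp_top
  | cons a t ih =>
    simp only [conj]
    exact Prf.and_intro_imp (prf_conj_mem (hsub a (by simp)))
      (ih fun ψ h => hsub ψ (by simp [h]))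

lemma prf_imply_weaken {l l' : List (Form α P)} {q : Form α P}
    (hsub : ∀ ψ ∈ l, ψ ∈ l') (h : Prf Ax (imply l q)) : Prf Ax (imply l' q) :=
  prf_imply_of_conj (Prf.imp_trans (prf_conj_mono hsub) (prf_conj_of_imply h))

lemma prf_box_conj (i : α) (l : List (Form α P)) :
    Prf Ax ((conj (l.map (Form.box i))).imp (Form.box i (conj l))) := by
  induction l with
  | nil =>
    simp only [List.map_nil, conj]
    exact Prf.weak.mp (Prf.nec Prf.taut_top)
  | cons a t ih =>
    simp only [List.map_cons, conj]
    have h3 : Prf Ax (Form.box i (a.imp ((conj t).imp (a.con (conj t))))) :=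
      Prf.nec Prf.and_pair
    have h6 : Prf Ax ((Form.box i a).imp
        ((Form.box i (conj t)).imp (Form.box i (a.con (conj t))))) :=
      Prf.imp_trans (Prf.box_mp h3) Prf.axK'
    exact ((Prf.frege4.mp h6).mp Prf.and_left).mp (Prf.imp_trans Prf.and_right ih)

lemma prf_box_imply (i : α) {l : List (Form α P)} {p : Form α P}
    (h : Prf Ax (imply l p)) :
    Prf Ax (imply (l.map (Form.box i)) (Form.box i p)) :=
  prf_imply_of_conj (Prf.imp_trans (prf_box_conj i l)
    (Prf.box_mp (Prf.nec (prf_conj_of_imply h))))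

/-! ### Maximal consistent sets -/

lemma mcs_closed {Γ : Set (Form α P)} (hΓ : MaximalConsistent Ax Γ)
    {l : List (Form α P)} (hl : ∀ ψ ∈ l, ψ ∈ Γ) {φ : Form α P}
    (hp : Prf Ax (imply l φ)) : φ ∈ Γ := by
  by_contra hφ
  have hneg : Form.neg φ ∈ Γ := (hΓ.2 φ).resolve_left hφ
  refine hΓ.1 ⟨Form.neg φ :: l, ?_, ?_⟩
  · intro ψ hψ
    rcases List.mem_cons.mp hψ with h | h
    · exact h ▸ hneg
    · exact hl ψ h
  · show Prf Ax ((Form.neg φ).imp (imply l Form.fls))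
    exact Prf.imp_trans (Prf.comp.mp (prf_conj_of_imply hp)) (prf_conj_to_imply l Form.fls)

lemma mcs_prf_mem {Γ : Set (Form α P)} (hΓ : MaximalConsistent Ax Γ)
    {φ : Form α P} (hp : Prf Ax φ) : φ ∈ Γ :=
  mcs_closed hΓ (l := []) (by simp) hp

lemma mcs_mp {Γ : Set (Form α P)} (hΓ : MaximalConsistent Ax Γ)
    {p q : Form α P} (h1 : p.imp q ∈ Γ) (h2 : p ∈ Γ) : q ∈ Γ :=
  mcs_closed hΓ (l := [p.imp q, p])
    (by intro ψ hψ; rcases List.mem_cons.mp hψ with rfl | hψ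
        · exact h1
        · rcases List.mem_cons.mp hψ with rfl | hψ
          · exact h2
          · simp at hψ)
    Prf.id1

lemma mcs_fls {Γ : Set (Form α P)} (hΓ : MaximalConsistent Ax Γ) :
    Form.fls ∉ Γ := fun h =>
  hΓ.1 ⟨[Form.fls], by intro ψ hψ; simp at hψ; exact hψ ▸ h, Prf.id1⟩

lemma mcs_not_both {Γ : Set (Form α P)} (hΓ : MaximalConsistent Ax Γ)
    {p : Form α P} (h1 : p ∈ Γ) (h2 : Form.neg p ∈ Γ) : False :=
  mcs_fls hΓ (mcs_mp hΓ h2 h1)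

lemma mcs_neg_iff {Γ : Set (Form α P)} (hΓ : MaximalConsistent Ax Γ)
    {p : Form α P} : Form.neg p ∈ Γ ↔ p ∉ Γ :=
  ⟨fun hn hp => mcs_not_both hΓ hp hn, fun h => (hΓ.2 p).resolve_left h⟩

lemma mcs_imp_iff {Γ : Set (Form α P)} (hΓ : MaximalConsistent Ax Γ)
    {p q : Form α P} : p.imp q ∈ Γ ↔ (p ∈ Γ → q ∈ Γ) := by
  constructor
  · exact fun h hp => mcs_mp hΓ h hp
  · intro h
    by_cases hp : p ∈ Γ
    · exact mcs_closed hΓ (l := [q])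
        (by intro ψ hψ; simp at hψ; exact hψ ▸ h hp) Prf.weak
    · exact mcs_closed hΓ (l := [Form.neg p])
        (by intro ψ hψ; simp at hψ; exact hψ ▸ (mcs_neg_iff hΓ).2 hp) Prf.neg_imp

lemma mcs_con_iff {Γ : Set (Form α P)} (hΓ : MaximalConsistent Ax Γ)
    {p q : Form α P} : p.con q ∈ Γ ↔ p ∈ Γ ∧ q ∈ Γ := by
  constructor
  · intro h
    constructor
    · exact mcs_closed hΓ (l := [p.con q])
        (by intro ψ hψ; simp at hψ; exact hψ ▸ h) Prf.and_left
    · exact mcs_closed hΓ (l := [p.con q])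
        (by intro ψ hψ; simp at hψ; exact hψ ▸ h) Prf.and_right
  · rintro ⟨h1, h2⟩
    exact mcs_closed hΓ (l := [p, q])
      (by intro ψ hψ; rcases List.mem_cons.mp hψ with rfl | hψ
          · exact h1
          · rcases List.mem_cons.mp hψ with rfl | hψ
            · exact h2
            · simp at hψ)
      Prf.and_pair

lemma mcs_dis_iff {Γ : Set (Form α P)} (hΓ : MaximalConsistent Ax Γ)
    {p q : Form α P} : p.dis q ∈ Γ ↔ p ∈ Γ ∨ q ∈ Γ := by
  constructor
  · intro h
    by_contra hc
    push_neg at hc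
    have h1 : Form.neg p ∈ Γ := (mcs_neg_iff hΓ).2 hc.1
    have h2 : Form.neg q ∈ Γ := (mcs_neg_iff hΓ).2 hc.2
    refine mcs_fls hΓ (mcs_closed hΓ (l := [p.neg, q.neg, p.dis q]) ?_ Prf.neg_or)
    intro ψ hψ
    rcases List.mem_cons.mp hψ with rfl | hψ
    · exact h1
    · rcases List.mem_cons.mp hψ with rfl | hψ
      · exact h2
      · rcases List.mem_cons.mp hψ with rfl | hψ
        · exact h
        · simp at hψ
  · rintro (h | h)
    · exact mcs_closed hΓ (l := [p])
        (by intro ψ hψ; simp at hψ; exact hψ ▸ h) Prf.or_inl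
    · exact mcs_closed hΓ (l := [q])
        (by intro ψ hψ; simp at hψ; exact hψ ▸ h) Prf.or_inr

lemma imply_extract {T : Set (Form α P)} {φ : Form α P} {l : List (Form α P)}
    (hl : ∀ ψ ∈ l, ψ ∈ insert φ T) (hp : Prf Ax (imply l Form.fls)) :
    ∃ lf : List (Form α P), (∀ ψ ∈ lf, ψ ∈ T) ∧ Prf Ax (imply lf (Form.neg φ)) := by
  classical
  refine ⟨l.filter (fun ψ => ψ ≠ φ), ?_, ?_⟩
  · intro ψ hψ
    rw [List.mem_filter] at hψ
    have hne : ψ ≠ φ := by simpa using hψ.2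
    rcases hl ψ hψ.1 with h | h
    · exact absurd h hne
    · exact h
  · have hsub : ∀ ψ ∈ l, ψ ∈ φ :: l.filter (fun ψ => ψ ≠ φ) := by
      intro ψ hψ
      by_cases h : ψ = φ
      · simp [h]
      · exact List.mem_cons_of_mem _ (List.mem_filter.2 ⟨hψ, by simp [h]⟩)
    have h1 : Prf Ax (imply (φ :: l.filter (fun ψ => ψ ≠ φ)) Form.fls) :=
      prf_imply_weaken hsub hp
    have h2 : Prf Ax ((φ.con (conj (l.filter (fun ψ => ψ ≠ φ)))).imp Form.fls) :=
      prf_conj_of_imply h1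
    exact prf_imply_of_conj (Prf.swap.mp (Prf.curry.mp h2))

lemma lindenbaum {Γ : Set (Form α P)} (hc : Consistent Ax Γ) :
    ∃ Δ, Γ ⊆ Δ ∧ MaximalConsistent Ax Δ := by
  obtain ⟨M, hM, hmax⟩ := zorn_subset_nonempty {S : Set (Form α P) | Consistent Ax S}
    (fun c hcS hch hne => by
      refine ⟨⋃₀ c, ?_, fun s hs => Set.subset_sUnion_of_mem hs⟩
      rintro ⟨l, hl, hp⟩
      have hub : ∃ S ∈ c, ∀ ψ ∈ l, ψ ∈ S := by
        clear hp
        induction l with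
        | nil => obtain ⟨S, hS⟩ := hne; exact ⟨S, hS, by simp⟩
        | cons a t ih =>
          obtain ⟨S, hS, hSt⟩ := ih (fun ψ h => hl ψ (List.mem_cons_of_mem _ h))
          obtain ⟨S', hS', ha⟩ := hl a List.mem_cons_self
          rcases hch.total hS hS' with h | h
          · refine ⟨S', hS', fun ψ hψ => ?_⟩
            rcases List.mem_cons.mp hψ with rfl | hm
            · exact ha
            · exact h (hSt ψ hm)
          · refine ⟨S, hS, fun ψ hψ => ?_⟩
            rcases List.mem_cons.mp hψ with rfl | hm
            · exact h ha
            · exact hSt ψ hm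
      obtain ⟨S, hS, hls⟩ := hub
      exact hcS hS ⟨l, hls, hp⟩) Γ hc
  refine ⟨M, hM, hmax.1, ?_⟩
  intro φ
  by_contra h
  push_neg at h
  have hext : ∀ ψ : Form α P, ψ ∉ M →
      ∃ lf, (∀ χ ∈ lf, χ ∈ M) ∧ Prf Ax (imply lf (Form.neg ψ)) := by
    intro ψ hψM
    have hincons : ¬ Consistent Ax (insert ψ M) := by
      intro hcon
      exact hψM (hmax.2 hcon (Set.subset_insert _ _) (Set.mem_insert _ _))
    rw [Consistent, not_not] at hincons
    obtain ⟨l, hl, hp⟩ := hincons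
    exact imply_extract hl hp
  obtain ⟨l1, hl1, hp1⟩ := hext φ h.1
  obtain ⟨l2, hl2, hp2⟩ := hext (Form.neg φ) h.2
  have hc1 : Prf Ax ((conj (l1 ++ l2)).imp (Form.neg φ)) :=
    prf_conj_of_imply (prf_imply_weaken (fun ψ h => List.mem_append_left _ h) hp1)
  have hc2 : Prf Ax ((conj (l1 ++ l2)).imp (Form.neg (Form.neg φ))) :=
    prf_conj_of_imply (prf_imply_weaken (fun ψ h => List.mem_append_right _ h) hp2)
  have hfls : Prf Ax ((conj (l1 ++ l2)).imp Form.fls) :=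
    ((Prf.frege4.mp Prf.absurd_t).mp hc1).mp hc2
  refine hmax.1 ⟨l1 ++ l2, ?_, prf_imply_of_conj hfls⟩
  intro ψ hψ
  rcases List.mem_append.mp hψ with h' | h'
  · exact hl1 ψ h'
  · exact hl2 ψ h'

/-! ### Canonical model -/

def canonM (Ax : Form α P → Prop) :
    Kripke α P {Γ : Set (Form α P) // MaximalConsistent Ax Γ} where
  val := fun Γ x => Form.var x ∈ Γ.1
  rel := fun i Γ Δ => ∀ p : Form α P, Form.box i p ∈ Γ.1 → p ∈ Δ.1

lemma truth_lemma (Γ : {Γ : Set (Form α P) // MaximalConsistent Ax Γ})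
    (φ : Form α P) : sat (canonM Ax) Γ φ ↔ φ ∈ Γ.1 := by
  induction φ generalizing Γ with
  | fls =>
    simp only [sat]
    exact ⟨False.elim, fun h => mcs_fls Γ.2 h⟩
  | var x => simp only [sat, canonM]
  | dis p q ihp ihq =>
    simp only [sat, ihp, ihq]
    exact (mcs_dis_iff Γ.2).symm
  | con p q ihp ihq =>
    simp only [sat, ihp, ihq]
    exact (mcs_con_iff Γ.2).symm
  | imp p q ihp ihq =>
    simp only [sat, ihp, ihq]
    exact (mcs_imp_iff Γ.2).symm
  | box i p ih =>
    simp only [sat]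
    constructor
    · intro hs
      by_contra hb
      have hcons : Consistent Ax (insert (Form.neg p) {q | Form.box i q ∈ Γ.1}) := by
        rintro ⟨l, hl, hp⟩
        obtain ⟨lf, hlf, hplf⟩ := imply_extract hl hp
        have h2 : Prf Ax (imply lf p) :=
          prf_imply_of_conj (Prf.imp_trans (prf_conj_of_imply hplf) Prf.dne)
        refine hb (mcs_closed Γ.2 (l := lf.map (Form.box i)) ?_ (prf_box_imply i h2))
        intro ψ hψ
        simp only [List.mem_map] at hψ
        obtain ⟨χ, hχ, rfl⟩ := hψ
        exact hlf χ hχ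
      obtain ⟨Δ, hsub, hΔ⟩ := lindenbaum hcons
      have hsp : sat (canonM Ax) ⟨Δ, hΔ⟩ p :=
        hs ⟨Δ, hΔ⟩ (fun q hq => hsub (Set.mem_insert_of_mem _ hq))
      exact mcs_not_both hΔ ((ih ⟨Δ, hΔ⟩).1 hsp) (hsub (Set.mem_insert _ _))
    · intro hb Δ hrel
      exact (ih Δ).2 (hrel p hb)

/-! ### S4.2 specifics -/

lemma prf42_T (i : α) (p : Form α P) : Prf AxS42 ((Form.box i p).imp p) :=
  .ax (Or.inl ⟨i, p, rfl⟩)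

lemma prf42_4 (i : α) (p : Form α P) :
    Prf AxS42 ((Form.box i p).imp (Form.box i (Form.box i p))) :=
  .ax (Or.inr (Or.inl ⟨i, p, rfl⟩))

lemma prf42_2 (i : α) (p : Form α P) :
    Prf AxS42 (((Form.box i (Form.box i p).neg).neg).imp
      (Form.box i (Form.box i p.neg).neg)) :=
  .ax (Or.inr (Or.inr ⟨i, p, rfl⟩))

lemma canon_refl : ReflexiveRel (canonM (AxS42 (α := α) (P := P))).rel :=
  fun i Γ p hp => mcs_mp Γ.2 (mcs_prf_mem Γ.2 (prf42_T i p)) hp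

lemma canon_trans : TransitiveRel (canonM (AxS42 (α := α) (P := P))).rel :=
  fun i Γ Δ Θ h1 h2 p hp =>
    h2 p (h1 (Form.box i p) (mcs_mp Γ.2 (mcs_prf_mem Γ.2 (prf42_4 i p)) hp))

lemma canon_dir : WeaklyDirected (canonM (AxS42 (α := α) (P := P))).rel := by
  intro i Γ w u hw hu
  classical
  have hcons : Consistent AxS42
      ({q | Form.box i q ∈ w.1} ∪ {q | Form.box i q ∈ u.1}) := by
    rintro ⟨l, hl, hp⟩
    set lw := l.filter (fun ψ => Form.box i ψ ∈ w.1) with hlwdef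
    set lu := l.filter (fun ψ => Form.box i ψ ∉ w.1) with hludef
    have hsub : ∀ ψ ∈ l, ψ ∈ lw ++ lu := by
      intro ψ hψ
      by_cases h : Form.box i ψ ∈ w.1
      · exact List.mem_append_left _ (List.mem_filter.2 ⟨hψ, by simp [h]⟩)
      · exact List.mem_append_right _ (List.mem_filter.2 ⟨hψ, by simp [h]⟩)
    have hmw : ∀ ψ ∈ lw, Form.box i ψ ∈ w.1 := by
      intro ψ hψ
      have h' := List.mem_filter.1 hψ
      simpa using h'.2
    have hmu : ∀ ψ ∈ lu, Form.box i ψ ∈ u.1 := by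
      intro ψ hψ
      have h' := List.mem_filter.1 hψ
      have hnw : Form.box i ψ ∉ w.1 := by simpa using h'.2
      rcases hl ψ h'.1 with h | h
      · exact absurd h hnw
      · exact h
    have hp' : Prf AxS42 (imply lw (imply lu Form.fls)) := by
      rw [← imply_append]
      exact prf_imply_weaken hsub hp
    have hPwPu : Prf AxS42 ((conj lw).imp ((conj lu).imp Form.fls)) :=
      Prf.imp_trans (prf_conj_of_imply hp') (prf_imply_to_conj lu Form.fls)
    have hswap : Prf AxS42 ((conj lu).imp (Form.neg (conj lw))) :=
      Prf.swap.mp hPwPu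
    have hbw : Form.box i (conj lw) ∈ w.1 := by
      refine mcs_closed w.2 (l := lw.map (Form.box i)) ?_
        (prf_box_imply i (prf_imply_of_conj Prf.id1))
      intro ψ hψ
      simp only [List.mem_map] at hψ
      obtain ⟨χ, hχ, rfl⟩ := hψ
      exact hmw χ hχ
    have hbu : Form.box i (conj lu) ∈ u.1 := by
      refine mcs_closed u.2 (l := lu.map (Form.box i)) ?_
        (prf_box_imply i (prf_imply_of_conj Prf.id1))
      intro ψ hψ
      simp only [List.mem_map] at hψ
      obtain ⟨χ, hχ, rfl⟩ := hψ
      exact hmu χ hχ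
    have hdia : Form.neg (Form.box i (Form.neg (Form.box i (conj lw)))) ∈ Γ.1 := by
      rcases Γ.2.2 (Form.neg (Form.box i (Form.neg (Form.box i (conj lw))))) with h | h
      · exact h
      · exfalso
        have hx : Form.box i (Form.neg (Form.box i (conj lw))) ∈ Γ.1 :=
          mcs_closed Γ.2
            (l := [Form.neg (Form.neg (Form.box i (Form.neg (Form.box i (conj lw)))))])
            (by intro ψ hψ; simp at hψ; exact hψ ▸ h) Prf.dne
        exact mcs_not_both w.2 hbw (hw _ hx)
    have hbox2 : Form.box i (Form.neg (Form.box i (Form.neg (conj lw)))) ∈ Γ.1 :=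
      mcs_mp Γ.2 (mcs_prf_mem Γ.2 (prf42_2 i (conj lw))) hdia
    have hnu : Form.neg (Form.box i (Form.neg (conj lw))) ∈ u.1 := hu _ hbox2
    have hbnp : Form.box i (Form.neg (conj lw)) ∈ u.1 :=
      mcs_mp u.2 (mcs_prf_mem u.2 (Prf.box_mp (Prf.nec hswap))) hbu
    exact mcs_not_both u.2 hbnp hnu
  obtain ⟨Δ, hsubΔ, hΔ⟩ := lindenbaum hcons
  exact ⟨⟨Δ, hΔ⟩, fun p hp => hsubΔ (Set.mem_union_left _ hp),
    fun p hp => hsubΔ (Set.mem_union_right _ hp)⟩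

/-! ### Soundness -/

lemma sat_beval {W : Type} (M : Kripke α P W) (w : W) (p : Form α P) :
    sat M w p ↔
      beval (fun x => decide (M.val w x) (h := Classical.propDecidable _))
        (fun q => decide (sat M w q) (h := Classical.propDecidable _)) p = true := by
  induction p with
  | fls => simp [sat, beval]
  | var x => simp [sat, beval]
  | dis p q ihp ihq => simp [sat, beval, ihp, ihq]
  | con p q ihp ihq => simp [sat, beval, ihp, ihq]
  | imp p q ihp ihq =>
    simp only [sat, beval, ihp, ihq, Bool.or_eq_true, Bool.not_eq_true']
    constructor
    · intro h
      by_cases hb : beval (fun x => decide (M.val w x) (h := Classical.propDecidable _))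
          (fun q => decide (sat M w q) (h := Classical.propDecidable _)) p = true
      · exact Or.inr (h hb)
      · exact Or.inl (by simpa using hb)
    · rintro (h | h) hp
      · rw [hp] at h; cases h
      · exact h
  | box i p ih =>
    simp [sat, beval]
    exact ⟨fun h => @decide_eq_true _ (Classical.propDecidable _) h,
      fun h => @of_decide_eq_true _ (Classical.propDecidable _) h⟩

lemma soundness42 {φ : Form α P} (h : Prf AxS42 φ) {W : Type} (M : Kripke α P W)
    (hr : ReflexiveRel M.rel) (ht : TransitiveRel M.rel) (hd : WeaklyDirected M.rel) :
    ∀ w, sat M w φ := by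
  induction h with
  | @taut p hp => intro w; rw [sat_beval]; exact hp _ _
  | @axK i p q =>
    intro w
    simp only [sat]
    exact fun hpq v hv => hpq.1 v hv (hpq.2 v hv)
  | @ax p hax =>
    intro w
    rcases hax with ⟨i, p, rfl⟩ | ⟨i, p, rfl⟩ | ⟨i, p, rfl⟩
    · simp only [sat]
      exact fun h => h w (hr i w)
    · simp only [sat]
      exact fun h v hv z hz => h z (ht i w v z hv hz)
    · simp only [Form.neg, sat]
      intro h v hv hbox
      apply h
      intro v' hv' hboxp
      obtain ⟨x, hx1, hx2⟩ := hd i w v' v hv' hv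
      exact hbox x hx2 (hboxp x hx1)
  | mp h1 h2 ih1 ih2 =>
    intro w
    have := ih1 w
    simp only [sat] at this
    exact this (ih2 w)
  | nec h ih =>
    intro w
    simp only [sat]
    exact fun v _ => ih v

end S42Machinery

/-- Main theorem for S4.2: with countable propositional symbols
and agent labels, a formula is valid in all Kripke models based on weakly
directed preorders iff it is a theorem of S4.2. -/
theorem main_S42 {α P : Type} [Countable α] [Countable P] (φ : Form α P) :
    (∀ (W : Type) (M : Kripke α P W), Nonempty W →
       ReflexiveRel M.rel → TransitiveRel M.rel → WeaklyDirected M.rel →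
       ∀ w : W, sat M w φ) ↔ Prf AxS42 φ := by
  constructor
  · intro hval
    by_contra hnp
    have hcons : Consistent AxS42 ({Form.neg φ} : Set (Form α P)) := by
      rintro ⟨l, hl, hp⟩
      have h1 : Prf AxS42 (imply [Form.neg φ] Form.fls) :=
        prf_imply_weaken (fun ψ h => by simpa using hl ψ h) hp
      exact hnp (Prf.dne.mp h1)
    obtain ⟨Δ, hsub, hΔ⟩ := lindenbaum hcons
    have hsat := hval _ (canonM AxS42) ⟨⟨Δ, hΔ⟩⟩ canon_refl canon_trans canon_dir ⟨Δ, hΔ⟩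
    exact mcs_not_both hΔ ((truth_lemma ⟨Δ, hΔ⟩ φ).1 hsat) (hsub rfl)
  · intro h W M _ hr ht hd w
    exact soundness42 h M hr ht hd w
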